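/- Let p be an odd prime and let G be a finite p-group of nilpotency class at most c. If k is a positive integer with p^{k-1} ≥ c+1, and C = ⟨y⟩ is a cyclic subgroup with C ≤ γ_c(G) (so C is central in G), then the subgroup G^{p^k}·C is powerful. -/

import Mathlib

/-!
Passing to `G ⧸ K^p`, it suffices to show that `K = G^{p^k} C` (with `C` central) is abelian
as soon as it has exponent `p`; this goes by induction on the class `c`. Dividing by the last
term of the lower central series, induction gives `[K, K] ≤ Z(G)`. The image of `K` in
`G ⧸ Z(G)` is then an abelian normal subgroup of exponent `p`, i.e. an `𝔽_p`-module on which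
`g` acts as `1 + τ`; since `τ` maps `γ_i` into `γ_{i+1}` we have `τ^c = 0`, and as
`c ≤ p^(k-1)` the Frobenius identity gives `(1 + τ)^(p^(k-1)) = 1`. So `[g^(p^(k-1)), x]` is
central for `x ∈ K`, whence `[g^(p^k), x] = [g^(p^(k-1)), x]^p = 1`: the generators of `K`
centralize `K`.
-/

/-- `subPow N m` is the subgroup generated by the `m`-th powers of elements of `N`. -/
def subPow {G : Type*} [Group G] (N : Subgroup G) (m : ℕ) : Subgroup G :=
  Subgroup.closure {x : G | ∃ n ∈ N, n ^ m = x}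

theorem one_add_pow_prime_pow_eq_one {R : Type*} [Semiring R] {p n m : ℕ} (hp : p.Prime)
    (hpR : (p : R) = 0) {t : R} (ht : t ^ m = 0) (hmn : m ≤ p ^ n) : (1 + t) ^ p ^ n = 1 := by
  obtain ⟨r, hr⟩ := (Commute.one_left t).exists_add_pow_prime_pow_eq hp n
  rw [hr, one_pow, pow_eq_zero_of_le hmn ht, hpR]
  simp

open scoped commutatorElement

section

variable {G H : Type*} [Group G] [Group H]

theorem pow_mem_subPow {N : Subgroup G} {x : G} (hx : x ∈ N) (m : ℕ) : x ^ m ∈ subPow N m :=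
  Subgroup.subset_closure ⟨x, hx, rfl⟩

theorem map_subPow (f : G →* H) (N : Subgroup G) (m : ℕ) :
    (subPow N m).map f = subPow (N.map f) m := by
  rw [subPow, subPow, MonoidHom.map_closure]
  congr 1
  ext
  simp

instance subPow_normal (N : Subgroup G) [N.Normal] (m : ℕ) : (subPow N m).Normal :=
  Subgroup.normal_iff_map_conj_eq.mpr fun g => by
    rw [map_subPow, Subgroup.Normal.map_conj_eq N g]

theorem normal_of_le_center {C : Subgroup G} (hC : C ≤ Subgroup.center G) : C.Normal :=
  ⟨fun z hz g => by rwa [Subgroup.mem_center_iff.mp (hC hz) g, mul_inv_cancel_right]⟩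

theorem subPow_top_sup_normal {C : Subgroup G} (hC : C ≤ Subgroup.center G) (m : ℕ) :
    (subPow ⊤ m ⊔ C).Normal :=
  haveI := normal_of_le_center hC
  inferInstance

theorem map_subPow_top_sup {f : G →* H} (hf : Function.Surjective f) (m : ℕ) (C : Subgroup G) :
    (subPow ⊤ m ⊔ C).map f = subPow ⊤ m ⊔ C.map f := by
  rw [Subgroup.map_sup, map_subPow, Subgroup.map_top_of_surjective f hf]

theorem map_le_center_of_surjective {f : G →* H} (hf : Function.Surjective f) {C : Subgroup G}
    (hC : C ≤ Subgroup.center G) : C.map f ≤ Subgroup.center H := by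
  rintro _ ⟨z, hz, rfl⟩
  rw [Subgroup.mem_center_iff]
  intro h
  obtain ⟨g, rfl⟩ := hf h
  rw [← map_mul, ← map_mul, Subgroup.mem_center_iff.mp (hC hz) g]

theorem pow_eq_one_of_mem_map {f : G →* H} {K : Subgroup G} {m : ℕ}
    (h : ∀ x ∈ K, x ^ m ∈ f.ker) : ∀ y ∈ K.map f, y ^ m = 1 := by
  rintro _ ⟨x, hx, rfl⟩
  rw [← map_pow]
  exact h x hx

theorem lowerCentralSeries_map_of_surjective {f : G →* H} (hf : Function.Surjective f) (n : ℕ) :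
    ((⊤ : Subgroup G).lowerCentralSeries n).map f = (⊤ : Subgroup H).lowerCentralSeries n := by
  rw [Subgroup.map_lowerCentralSeries, Subgroup.map_top_of_surjective f hf]

theorem lowerCentralSeries_le_center {n : ℕ}
    (h : (⊤ : Subgroup G).lowerCentralSeries (n + 1) = ⊥) :
    (⊤ : Subgroup G).lowerCentralSeries n ≤ Subgroup.center G :=
  Subgroup.commutator_top_right_eq_bot_iff_le_center.mp h

theorem commutatorElement_pow_left {b x : G} (h : Commute b ⁅b, x⁆) (n : ℕ) :
    ⁅b ^ n, x⁆ = ⁅b, x⁆ ^ n := by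
  induction n with
  | zero => simp [commutatorElement_def]
  | succ n ih =>
    have hstep : ⁅b ^ (n + 1), x⁆ = b * ⁅b ^ n, x⁆ * b⁻¹ * ⁅b, x⁆ := by
      simp only [commutatorElement_def, pow_succ']
      group
    rw [hstep, ih, (h.pow_right n).eq, mul_inv_cancel_right, pow_succ]

open scoped IsMulCommutative in
theorem pow_prime_pow_mem_centralizer_of_isMulCommutative {p c n : ℕ}
    (hp : p.Prime) (hnil : (⊤ : Subgroup G).lowerCentralSeries c = ⊥) (hcn : c ≤ p ^ n)
    (A : Subgroup G) [A.Normal] [IsMulCommutative A] (hexp : ∀ a ∈ A, a ^ p = 1) (g : G) :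
    g ^ p ^ n ∈ Subgroup.centralizer A := by
  let ρ : G →* AddMonoid.End (Additive A) := (monoidEndToAdditive A).toMonoidHom.comp
    ((MulDistribMulAction.toMonoidEnd (ConjAct G) A).comp ConjAct.toConjAct.toMonoidHom)
  have ρ_apply (h : G) (a : A) : ((ρ h (.ofMul a)).toMul : G) = h * a * h⁻¹ := rfl
  set τ := ρ g - 1
  have τ_apply (a : A) : ((τ (.ofMul a)).toMul : G) = ⁅g, (a : G)⁆ := by
    change ((ρ g (.ofMul a) - .ofMul a).toMul : G) = _
    rw [toMul_sub, Subgroup.coe_div, ρ_apply, commutatorElement_def, div_eq_mul_inv, toMul_ofMul]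
  have τ_pow_mem (i : ℕ) (a : A) :
      ((τ ^ i) (.ofMul a)).toMul.1 ∈ (⊤ : Subgroup G).lowerCentralSeries i := by
    induction i with
    | zero => trivial
    | succ i ih =>
      rw [pow_succ', AddMonoid.End.coe_mul, Function.comp_apply,
        ← ofMul_toMul ((τ ^ i) (.ofMul a)), τ_apply,
        Subgroup.lowerCentralSeries_succ, Subgroup.commutator_comm]
      exact Subgroup.commutator_mem_commutator trivial ih
  have τ_nilpotent : τ ^ c = 0 := by
    ext a
    have := τ_pow_mem c a.toMul
    rw [hnil, Subgroup.mem_bot] at this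
    simpa using this
  have p_eq_zero : (p : AddMonoid.End (Additive A)) = 0 := by
    ext a
    simpa using hexp a.toMul a.toMul.2
  have ρ_pow : ρ (g ^ p ^ n) = 1 := by
    rw [map_pow, ← add_sub_cancel 1 (ρ g)]
    exact one_add_pow_prime_pow_eq_one hp p_eq_zero τ_nilpotent hcn
  rw [Subgroup.mem_centralizer_iff]
  intro a ha
  have hfix : g ^ p ^ n * a * (g ^ p ^ n)⁻¹ = a :=
    congrArg (fun v => (v.toMul : G)) (DFunLike.congr_fun ρ_pow (.ofMul ⟨a, ha⟩))
  exact (mul_inv_eq_iff_eq_mul.mp hfix).symm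

theorem pow_prime_pow_succ_mem_centralizer {p c n : ℕ} (hp : p.Prime)
    (hnil : (⊤ : Subgroup G).lowerCentralSeries c = ⊥) (hcn : c ≤ p ^ n)
    (K : Subgroup G) [K.Normal] (hK : ⁅K, K⁆ ≤ Subgroup.center G) (hexp : ∀ x ∈ K, x ^ p = 1)
    (g : G) : g ^ p ^ (n + 1) ∈ Subgroup.centralizer K := by
  let π := QuotientGroup.mk' (Subgroup.center G)
  have hπ : Function.Surjective π := QuotientGroup.mk'_surjective _
  have : (K.map π).Normal := Subgroup.Normal.map inferInstance π hπ
  have : IsMulCommutative (K.map π) := by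
    rwa [← Subgroup.commutator_self_eq_bot_iff, ← Subgroup.map_commutator,
      Subgroup.map_eq_bot_iff, QuotientGroup.ker_mk']
  have hπg := pow_prime_pow_mem_centralizer_of_isMulCommutative hp
    (by rw [← lowerCentralSeries_map_of_surjective hπ, hnil, Subgroup.map_bot]) hcn (K.map π)
    (pow_eq_one_of_mem_map fun x hx => by rw [hexp x hx]; exact one_mem _) (π g)
  rw [Subgroup.mem_centralizer_iff]
  intro x hx
  have hcentral : ⁅g ^ p ^ n, x⁆ ∈ Subgroup.center G := by
    rw [← QuotientGroup.ker_mk' (Subgroup.center G), MonoidHom.mem_ker, map_commutatorElement,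
      commutatorElement_eq_one_iff_mul_comm, map_pow]
    exact (Subgroup.mem_centralizer_iff.mp hπg (π x) ⟨x, hx, rfl⟩).symm
  have hmem : ⁅g ^ p ^ n, x⁆ ∈ K := by
    rw [commutatorElement_def]
    exact mul_mem (Subgroup.Normal.conj_mem inferInstance x hx _) (inv_mem hx)
  have htrivial : ⁅g ^ p ^ (n + 1), x⁆ = 1 := by
    rw [pow_succ, pow_mul, commutatorElement_pow_left (Subgroup.mem_center_iff.mp hcentral _),
      hexp _ hmem]
  exact (commutatorElement_eq_one_iff_mul_comm.mp htrivial).symm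

theorem commutator_subPow_top_sup_eq_bot {p n c : ℕ} (hp : p.Prime) (hcn : c ≤ p ^ n)
    (hnil : (⊤ : Subgroup G).lowerCentralSeries c = ⊥)
    {C : Subgroup G} (hC : C ≤ Subgroup.center G)
    (hexp : ∀ x ∈ subPow ⊤ (p ^ (n + 1)) ⊔ C, x ^ p = 1) :
    ⁅subPow ⊤ (p ^ (n + 1)) ⊔ C, subPow ⊤ (p ^ (n + 1)) ⊔ C⁆ = ⊥ := by
  induction c generalizing G with
  | zero =>
    have htop : (⊤ : Subgroup G) = ⊥ := hnil
    exact eq_bot_iff.mpr (htop ▸ le_top)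
  | succ c ih =>
    set K := subPow ⊤ (p ^ (n + 1)) ⊔ C
    have : K.Normal := subPow_top_sup_normal hC _
    let π := QuotientGroup.mk' ((⊤ : Subgroup G).lowerCentralSeries c)
    have hπ : Function.Surjective π := QuotientGroup.mk'_surjective _
    have hKK : ⁅K, K⁆ ≤ Subgroup.center G := by
      have hquot := ih (by omega) (G := G ⧸ (⊤ : Subgroup G).lowerCentralSeries c)
        (by rw [← lowerCentralSeries_map_of_surjective hπ, Subgroup.map_eq_bot_iff,
          QuotientGroup.ker_mk'])
        (map_le_center_of_surjective hπ hC)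
        (by
          rw [← map_subPow_top_sup hπ]
          exact pow_eq_one_of_mem_map fun x hx => by rw [hexp x hx]; exact one_mem _)
      rw [← map_subPow_top_sup hπ, ← Subgroup.map_commutator, Subgroup.map_eq_bot_iff,
        QuotientGroup.ker_mk'] at hquot
      exact hquot.trans (lowerCentralSeries_le_center hnil)
    have hpowers : subPow ⊤ (p ^ (n + 1)) ≤ Subgroup.centralizer (K : Set G) := by
      rw [subPow, Subgroup.closure_le]
      rintro _ ⟨g, -, rfl⟩
      exact pow_prime_pow_succ_mem_centralizer hp hnil hcn K hKK hexp g
    exact Subgroup.commutator_eq_bot_iff_le_centralizer.mpr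
      (sup_le hpowers (hC.trans (Subgroup.center_le_centralizer _)))

end

theorem pk_powers_join_central_cyclic_is_powerful_general
    {p : ℕ} (hp : p.Prime) (c k : ℕ) (hc : 0 < c) (hk : 0 < k)
    (hck : c + 1 ≤ p ^ (k - 1))
    {G : Type*} [Group G]
    (hnil : (⊤ : Subgroup G).lowerCentralSeries c = ⊥)
    (y : G) (hy : Subgroup.zpowers y ≤ (⊤ : Subgroup G).lowerCentralSeries (c - 1))
    (K : Subgroup G) (hK : K = subPow (⊤ : Subgroup G) (p ^ k) ⊔ Subgroup.zpowers y) :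
    ⁅K, K⁆ ≤ subPow K p := by
  obtain ⟨n, rfl⟩ : ∃ n, k = n + 1 := ⟨k - 1, by omega⟩
  rw [Nat.add_sub_cancel] at hck
  have hC : Subgroup.zpowers y ≤ Subgroup.center G :=
    hy.trans (lowerCentralSeries_le_center (by rwa [Nat.sub_add_cancel hc]))
  have : K.Normal := hK ▸ subPow_top_sup_normal hC _
  let π := QuotientGroup.mk' (subPow K p)
  have hπ : Function.Surjective π := QuotientGroup.mk'_surjective _
  have hexp : ∀ x ∈ subPow ⊤ (p ^ (n + 1)) ⊔ (Subgroup.zpowers y).map π, x ^ p = 1 := by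
    rw [← map_subPow_top_sup hπ, ← hK]
    exact pow_eq_one_of_mem_map fun x hx => by
      rw [QuotientGroup.ker_mk']
      exact pow_mem_subPow hx p
  have hquot := commutator_subPow_top_sup_eq_bot hp (c := c) (by omega)
    (by rw [← lowerCentralSeries_map_of_surjective hπ, hnil, Subgroup.map_bot])
    (map_le_center_of_surjective hπ hC) hexp
  rwa [← map_subPow_top_sup hπ, ← hK, ← Subgroup.map_commutator, Subgroup.map_eq_bot_iff,
    QuotientGroup.ker_mk'] at hquot

/-- Let `p` be odd, `G` a finite `p`-group of nilpotency class at most `c`, `p^{k-1} ≥ c+1`,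
and `C = ⟨y⟩` a cyclic subgroup with `C ≤ γ_c(G) = lowerCentralSeries G (c-1)`.
Then `G^{p^k}·C` is powerful. -/
theorem pk_powers_join_central_cyclic_is_powerful
    {p : ℕ} (hp : p.Prime) (hodd : p ≠ 2) (c k : ℕ) (hc : 0 < c) (hk : 0 < k)
    (hck : c + 1 ≤ p ^ (k - 1))
    {G : Type*} [Group G] [Fintype G] (hG : IsPGroup p G)
    (hnil : (⊤ : Subgroup G).lowerCentralSeries c = ⊥)
    (y : G) (hy : Subgroup.zpowers y ≤ (⊤ : Subgroup G).lowerCentralSeries (c - 1))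
    (K : Subgroup G) (hK : K = subPow (⊤ : Subgroup G) (p ^ k) ⊔ Subgroup.zpowers y) :
    ⁅K, K⁆ ≤ subPow K p :=
  pk_powers_join_central_cyclic_is_powerful_general hp c k hc hk hck hnil y hy K hK
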